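/- For fixed $\lambda, \alpha_1, \alpha_2 \in \mathbb{C}^*$, $\beta_1, \beta_2, \gamma_1, \gamma_2 \in \mathbb{C}$ and any $l \in \mathbb{Z}_{\geq 0}$, the subspace $W_l = \mathrm{span}\{s_1^r (s_1+s_2)^p g \mid r, p \in \mathbb{Z}_{\geq 0},\ r \leq l,\ g \in \mathbb{C}[t_1, t_2]\}$ is a proper submodule of the tensor product module $\Omega(\lambda, \alpha_1, \beta_1, \gamma_1) \otimes \Omega(\lambda, \alpha_2, \beta_2, \gamma_2)$ over the affine-Virasoro algebra of type $A_1$. In particular, this tensor product module is reducible. -/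
import Mathlib


open MvPolynomial

/-- `ℂ[s₁,s₂,t₁,t₂]`: variables `0 = s₁`, `1 = s₂`, `2 = t₁`, `3 = t₂`. -/
noncomputable abbrev P4 : Type := MvPolynomial (Fin 4) ℂ

/-- Substitution acting on the first tensor factor: `(s₁,t₁) ↦ (s₁ - i, t₁ + a)`. -/
noncomputable def subA (i : ℤ) (a : ℂ) : P4 →ₐ[ℂ] P4 :=
  aeval ![X 0 - C (i : ℂ), X 1, X 2 + C a, X 3]

/-- Substitution acting on the second tensor factor: `(s₂,t₂) ↦ (s₂ - i, t₂ + a)`. -/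
noncomputable def subB (i : ℤ) (a : ℂ) : P4 →ₐ[ℂ] P4 :=
  aeval ![X 0, X 1 - C (i : ℂ), X 2, X 3 + C a]

/-- Diagonal action of `e_i` on `Ω(λ,α₁,β₁,γ₁) ⊗ Ω(λ,α₂,β₂,γ₂) ≅ ℂ[s₁,s₂,t₁,t₂]`. -/
noncomputable def tE (lam a1 a2 : ℂ) (i : ℤ) (g : P4) : P4 :=
  (lam ^ i * a1) • subA i (-2) g + (lam ^ i * a2) • subB i (-2) g

/-- Diagonal action of `f_i`. -/
noncomputable def tF (lam a1 a2 b1 b2 : ℂ) (i : ℤ) (g : P4) : P4 :=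
  (-(lam ^ i / a1)) • ((C (1/2 : ℂ) * X 2 - C b1) * (C (1/2 : ℂ) * X 2 + C b1 + 1) *
      subA i 2 g) +
  (-(lam ^ i / a2)) • ((C (1/2 : ℂ) * X 3 - C b2) * (C (1/2 : ℂ) * X 3 + C b2 + 1) *
      subB i 2 g)

/-- Diagonal action of `h_i`. -/
noncomputable def tH (lam : ℂ) (i : ℤ) (g : P4) : P4 :=
  lam ^ i • (X 2 * subA i 0 g) + lam ^ i • (X 3 * subB i 0 g)

/-- Diagonal action of `d_i`. -/
noncomputable def tD (lam g1 g2 : ℂ) (i : ℤ) (g : P4) : P4 :=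
  lam ^ i • ((X 0 + C ((i : ℂ) * g1)) * subA i 0 g) +
    lam ^ i • ((X 1 + C ((i : ℂ) * g2)) * subB i 0 g)

/-- Embedding of `ℂ[t₁,t₂]` into `ℂ[s₁,s₂,t₁,t₂]`. -/
noncomputable def tEmb : MvPolynomial (Fin 2) ℂ →ₐ[ℂ] P4 :=
  MvPolynomial.rename ![2, 3]

/-- The subspace `W_l = span{s₁^r (s₁+s₂)^p ℂ[t₁,t₂] ∣ r ≤ l}`. -/
noncomputable def Wl (l : ℕ) : Submodule ℂ P4 :=
  Submodule.span ℂ {q : P4 | ∃ (r p : ℕ) (g : MvPolynomial (Fin 2) ℂ),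
    r ≤ l ∧ q = X 0 ^ r * (X 0 + X 1) ^ p * tEmb g}

/-! ### Auxiliary setup -/

/-- The subalgebra embedding of `ℂ[s₁+s₂, t₁, t₂]`. -/
noncomputable def rho : MvPolynomial (Fin 3) ℂ →ₐ[ℂ] P4 := aeval ![X 0 + X 1, X 2, X 3]

lemma rho_rename (g : MvPolynomial (Fin 2) ℂ) : rho (rename ![1, 2] g) = tEmb g := by
  rw [rho, aeval_rename]
  have h1 : (![(X 0 : P4) + X 1, X 2, X 3] ∘ ![1, 2]) = (X ∘ ![2, 3]) := by
    funext j; fin_cases j <;> simp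
  rw [h1, show (aeval (X ∘ ![2,3]) g : P4) = aeval X (rename ![2,3] g) from
    (aeval_rename _ _ _).symm, aeval_X_left_apply]
  rfl

lemma mulGen (l : ℕ) (n : Fin 3) {q : P4} (hq : q ∈ Wl l) : q * rho (X n) ∈ Wl l := by
  induction hq using Submodule.span_induction with
  | mem x hx =>
    obtain ⟨r, p, g, hr, rfl⟩ := hx
    fin_cases n
    · exact Submodule.subset_span ⟨r, p + 1, g, hr, by simp [rho]; ring⟩
    · refine Submodule.subset_span ⟨r, p, g * X 0, hr, ?_⟩
      have h : tEmb (g * X 0) = tEmb g * X 2 := by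
        rw [map_mul]; congr 1; simp [tEmb]
      rw [h]; simp [rho]; ring
    · refine Submodule.subset_span ⟨r, p, g * X 1, hr, ?_⟩
      have h : tEmb (g * X 1) = tEmb g * X 3 := by
        rw [map_mul]; congr 1; simp [tEmb]
      rw [h]; simp [rho]; ring
  | zero => simp
  | add x y _ _ hx hy => rw [add_mul]; exact add_mem hx hy
  | smul c x _ hx => rw [smul_mul_assoc]; exact Submodule.smul_mem _ _ hx

lemma memW (l k : ℕ) (hk : k ≤ l) (G : MvPolynomial (Fin 3) ℂ) :
    (X 0 : P4) ^ k * rho G ∈ Wl l := by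
  induction G using MvPolynomial.induction_on with
  | C c =>
    refine Submodule.subset_span ⟨k, 0, C c, hk, ?_⟩
    simp [rho, tEmb]
  | add p q hp hq => rw [map_add, mul_add]; exact add_mem hp hq
  | mul_X p n hp =>
    rw [map_mul, ← mul_assoc]
    exact mulGen l n hp

lemma key (l : ℕ) (f : Polynomial ℂ) (hf : f.natDegree ≤ l) (G : MvPolynomial (Fin 3) ℂ) :
    (Polynomial.aeval (X 0 : P4) f) * rho G ∈ Wl l := by
  rw [Polynomial.aeval_eq_sum_range' (lt_of_le_of_lt hf (Nat.lt_succ_self l)), Finset.sum_mul]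
  refine Submodule.sum_mem _ fun k hk => ?_
  rw [smul_mul_assoc]
  exact Submodule.smul_mem _ _ (memW l k (Nat.le_of_lt_succ (Finset.mem_range.mp hk)) G)

lemma keyPow (l r : ℕ) (hr : r ≤ l) (c : ℂ) (G : MvPolynomial (Fin 3) ℂ) :
    ((X 0 : P4) - C c) ^ r * rho G ∈ Wl l := by
  have h1 : ((X 0 : P4) - C c) ^ r
      = Polynomial.aeval (X 0 : P4) ((Polynomial.X - Polynomial.C c) ^ r) := by
    simp [algebraMap_eq]
  rw [h1]
  refine key l _ ?_ G
  rw [Polynomial.natDegree_pow, Polynomial.natDegree_X_sub_C, mul_one]; exact hr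

lemma subA_emb (i : ℤ) (a : ℂ) (g : MvPolynomial (Fin 2) ℂ) :
    subA i a (tEmb g) = tEmb (aeval ![X 0 + C a, X 1] g) := by
  have hR : tEmb (aeval ![X 0 + C a, X 1] g)
      = aeval (fun j => tEmb (![X 0 + C a, X 1] j)) g := comp_aeval_apply _ _ _
  rw [hR, tEmb, subA, aeval_rename]
  have hfun : (![(X 0 : P4) - C (i:ℂ), X 1, X 2 + C a, X 3] ∘ ![2, 3])
      = fun j => (rename (R := ℂ) ![2, 3]) (![X 0 + C a, X 1] j) := by
    funext j; fin_cases j <;> simp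
  rw [hfun]

lemma subB_emb (i : ℤ) (a : ℂ) (g : MvPolynomial (Fin 2) ℂ) :
    subB i a (tEmb g) = tEmb (aeval ![X 0, X 1 + C a] g) := by
  have hR : tEmb (aeval ![X 0, X 1 + C a] g)
      = aeval (fun j => tEmb (![X 0, X 1 + C a] j)) g := comp_aeval_apply _ _ _
  rw [hR, tEmb, subB, aeval_rename]
  have hfun : (![(X 0 : P4), X 1 - C (i:ℂ), X 2, X 3 + C a] ∘ ![2, 3])
      = fun j => (rename (R := ℂ) ![2, 3]) (![X 0, X 1 + C a] j) := by
    funext j; fin_cases j <;> simp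
  rw [hfun]

lemma aevalA_zero (g : MvPolynomial (Fin 2) ℂ) : aeval ![X 0 + C (0:ℂ), X 1] g = g := by
  have h : ![(X 0 : MvPolynomial (Fin 2) ℂ) + C 0, X 1] = X := by
    funext j; fin_cases j <;> simp
  rw [h, aeval_X_left_apply]

lemma aevalB_zero (g : MvPolynomial (Fin 2) ℂ) : aeval ![X 0, X 1 + C (0:ℂ)] g = g := by
  have h : ![(X 0 : MvPolynomial (Fin 2) ℂ), X 1 + C 0] = X := by
    funext j; fin_cases j <;> simp
  rw [h, aeval_X_left_apply]

/-- The 3-variable polynomial produced by `subA` from a generator. -/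
noncomputable def GA (i : ℤ) (a : ℂ) (p : ℕ) (g : MvPolynomial (Fin 2) ℂ) :
    MvPolynomial (Fin 3) ℂ :=
  (X 0 - C (i : ℂ)) ^ p * rename ![1, 2] (aeval ![X 0 + C a, X 1] g)

/-- The 3-variable polynomial produced by `subB` from a generator. -/
noncomputable def GB (i : ℤ) (a : ℂ) (p : ℕ) (g : MvPolynomial (Fin 2) ℂ) :
    MvPolynomial (Fin 3) ℂ :=
  (X 0 - C (i : ℂ)) ^ p * rename ![1, 2] (aeval ![X 0, X 1 + C a] g)

lemma subA_X0 (i : ℤ) (a : ℂ) : subA i a (X 0) = X 0 - C (i : ℂ) := by simp [subA]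
lemma subA_X01 (i : ℤ) (a : ℂ) : subA i a (X 0 + X 1) = X 0 + X 1 - C (i : ℂ) := by
  simp [subA]; ring
lemma subB_X0 (i : ℤ) (a : ℂ) : subB i a (X 0) = X 0 := by simp [subB]
lemma subB_X01 (i : ℤ) (a : ℂ) : subB i a (X 0 + X 1) = X 0 + X 1 - C (i : ℂ) := by
  simp [subB]; ring
lemma rho_X0C (c : ℂ) : rho (X 0 - C c) = X 0 + X 1 - C c := by simp [rho]

lemma subA_gen (i : ℤ) (a : ℂ) (r p : ℕ) (g : MvPolynomial (Fin 2) ℂ) :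
    subA i a (X 0 ^ r * (X 0 + X 1) ^ p * tEmb g)
      = (X 0 - C (i : ℂ)) ^ r * rho (GA i a p g) := by
  rw [map_mul, map_mul, map_pow, map_pow, subA_emb, GA, map_mul, map_pow, rho_rename,
    subA_X0, subA_X01, rho_X0C]
  ring

lemma subB_gen (i : ℤ) (a : ℂ) (r p : ℕ) (g : MvPolynomial (Fin 2) ℂ) :
    subB i a (X 0 ^ r * (X 0 + X 1) ^ p * tEmb g)
      = X 0 ^ r * rho (GB i a p g) := by
  rw [map_mul, map_mul, map_pow, map_pow, subB_emb, GB, map_mul, map_pow, rho_rename,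
    subB_X0, subB_X01, rho_X0C]
  ring

lemma rho_mul_shift (h G : MvPolynomial (Fin 3) ℂ) (y : P4) :
    rho h * (y * rho G) = y * rho (h * G) := by rw [map_mul]; ring

lemma tE_mem (lam a1 a2 : ℂ) (i : ℤ) (l : ℕ) {q : P4} (hq : q ∈ Wl l) :
    tE lam a1 a2 i q ∈ Wl l := by
  induction hq using Submodule.span_induction with
  | mem x hx =>
    obtain ⟨r, p, g, hr, rfl⟩ := hx
    rw [tE, subA_gen, subB_gen]
    exact add_mem (Submodule.smul_mem _ _ (keyPow l r hr _ _))
      (Submodule.smul_mem _ _ (memW l r hr _))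
  | zero => simp [tE]
  | add x y _ _ hx hy =>
    have h : tE lam a1 a2 i (x + y) = tE lam a1 a2 i x + tE lam a1 a2 i y := by
      simp only [tE, map_add, smul_add]; ring
    rw [h]; exact add_mem hx hy
  | smul c x _ hx =>
    have h : tE lam a1 a2 i (c • x) = c • tE lam a1 a2 i x := by
      simp [tE, map_smul, smul_add, smul_smul, mul_comm]
    rw [h]; exact Submodule.smul_mem _ _ hx

lemma tF_mem (lam a1 a2 b1 b2 : ℂ) (i : ℤ) (l : ℕ) {q : P4} (hq : q ∈ Wl l) :
    tF lam a1 a2 b1 b2 i q ∈ Wl l := by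
  induction hq using Submodule.span_induction with
  | mem x hx =>
    obtain ⟨r, p, g, hr, rfl⟩ := hx
    rw [tF, subA_gen, subB_gen,
      show (C (1/2 : ℂ) * X 2 - C b1) * (C (1/2 : ℂ) * X 2 + C b1 + 1)
        = rho ((C (1/2 : ℂ) * X 1 - C b1) * (C (1/2 : ℂ) * X 1 + C b1 + 1)) by simp [rho],
      show (C (1/2 : ℂ) * X 3 - C b2) * (C (1/2 : ℂ) * X 3 + C b2 + 1)
        = rho ((C (1/2 : ℂ) * X 2 - C b2) * (C (1/2 : ℂ) * X 2 + C b2 + 1)) by simp [rho],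
      rho_mul_shift, rho_mul_shift]
    exact add_mem (Submodule.smul_mem _ _ (keyPow l r hr _ _))
      (Submodule.smul_mem _ _ (memW l r hr _))
  | zero => simp [tF]
  | add x y _ _ hx hy =>
    have h : tF lam a1 a2 b1 b2 i (x + y) = tF lam a1 a2 b1 b2 i x + tF lam a1 a2 b1 b2 i y := by
      simp only [tF, map_add, mul_add, smul_add]; ring
    rw [h]; exact add_mem hx hy
  | smul c x _ hx =>
    have h : tF lam a1 a2 b1 b2 i (c • x) = c • tF lam a1 a2 b1 b2 i x := by
      simp [tF, map_smul, smul_add, smul_smul, mul_smul_comm, mul_comm]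
    rw [h]; exact Submodule.smul_mem _ _ hx

lemma tH_mem (lam : ℂ) (i : ℤ) (l : ℕ) {q : P4} (hq : q ∈ Wl l) :
    tH lam i q ∈ Wl l := by
  induction hq using Submodule.span_induction with
  | mem x hx =>
    obtain ⟨r, p, g, hr, rfl⟩ := hx
    rw [tH, subA_gen, subB_gen,
      show (X 2 : P4) = rho (X 1) by simp [rho],
      show (X 3 : P4) = rho (X 2) by simp [rho],
      rho_mul_shift, rho_mul_shift]
    exact add_mem (Submodule.smul_mem _ _ (keyPow l r hr _ _))
      (Submodule.smul_mem _ _ (memW l r hr _))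
  | zero => simp [tH]
  | add x y _ _ hx hy =>
    have h : tH lam i (x + y) = tH lam i x + tH lam i y := by
      simp only [tH, map_add, mul_add, smul_add]; ring
    rw [h]; exact add_mem hx hy
  | smul c x _ hx =>
    have h : tH lam i (c • x) = c • tH lam i x := by
      simp [tH, map_smul, smul_add, smul_smul, mul_smul_comm, mul_comm]
    rw [h]; exact Submodule.smul_mem _ _ hx

lemma fdeg (c1 c2 c3 : ℂ) (r l : ℕ) (hr : r ≤ l) :
    ((Polynomial.X + Polynomial.C c1) * (Polynomial.X - Polynomial.C c3) ^ r
      - (Polynomial.X - Polynomial.C c2) * Polynomial.X ^ r : Polynomial ℂ).natDegree ≤ l := by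
  set g := (Polynomial.X + Polynomial.C c1) * (Polynomial.X - Polynomial.C c3) ^ r with hgdef
  set h := (Polynomial.X - Polynomial.C c2) * Polynomial.X ^ r with hhdef
  have hg : g.Monic := (Polynomial.monic_X_add_C c1).mul ((Polynomial.monic_X_sub_C c3).pow r)
  have hh : h.Monic := (Polynomial.monic_X_sub_C c2).mul (Polynomial.monic_X_pow r)
  have hgd : g.natDegree = 1 + r := by
    rw [hgdef, (Polynomial.monic_X_add_C c1).natDegree_mul ((Polynomial.monic_X_sub_C c3).pow r),
      Polynomial.natDegree_X_add_C, Polynomial.natDegree_pow, Polynomial.natDegree_X_sub_C,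
      mul_one]
  have hhd : h.natDegree = 1 + r := by
    rw [hhdef, (Polynomial.monic_X_sub_C c2).natDegree_mul (Polynomial.monic_X_pow r),
      Polynomial.natDegree_X_sub_C, Polynomial.natDegree_X_pow]
  by_cases h0 : g - h = 0
  · rw [h0]; simp
  · have hdlt : (g - h).degree < g.degree :=
      Polynomial.degree_sub_lt
        (by rw [Polynomial.degree_eq_natDegree hg.ne_zero,
          Polynomial.degree_eq_natDegree hh.ne_zero, hgd, hhd])
        hg.ne_zero (by rw [hg.leadingCoeff, hh.leadingCoeff])
    have h2 : (g - h).natDegree < 1 + r := by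
      rw [← hgd]
      exact (Polynomial.natDegree_lt_iff_degree_lt h0).mpr
        (by rw [← Polynomial.degree_eq_natDegree hg.ne_zero]; exact hdlt)
    omega

lemma tD_mem (lam g1 g2 : ℂ) (i : ℤ) (l : ℕ) {q : P4} (hq : q ∈ Wl l) :
    tD lam g1 g2 i q ∈ Wl l := by
  induction hq using Submodule.span_induction with
  | mem x hx =>
    obtain ⟨r, p, g, hr, rfl⟩ := hx
    rw [tD, subA_gen, subB_gen,
      show GA i 0 p g = GB i 0 p g by rw [GA, GB, aevalA_zero, aevalB_zero], ← smul_add]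
    refine Submodule.smul_mem _ _ ?_
    set G0 := GB i 0 p g with hG0
    set f : Polynomial ℂ := (Polynomial.X + Polynomial.C ((i:ℂ) * g1))
        * (Polynomial.X - Polynomial.C (i:ℂ)) ^ r
      - (Polynomial.X - Polynomial.C ((i:ℂ) * g2)) * Polynomial.X ^ r with hf
    have hre : (X 0 + C ((i:ℂ) * g1)) * ((X 0 - C (i:ℂ)) ^ r * rho G0)
        + (X 1 + C ((i:ℂ) * g2)) * (X 0 ^ r * rho G0)
        = X 0 ^ r * rho (X 0 * G0) + Polynomial.aeval (X 0 : P4) f * rho G0 := by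
      have h1 : rho (X 0 * G0) = (X 0 + X 1) * rho G0 := by
        rw [map_mul]; simp [rho]
      have h2 : Polynomial.aeval (X 0 : P4) f
          = (X 0 + C ((i:ℂ) * g1)) * (X 0 - C (i:ℂ)) ^ r
            - (X 0 - C ((i:ℂ) * g2)) * X 0 ^ r := by
        simp [hf, algebraMap_eq]
      rw [h1, h2]; ring
    rw [hre]
    exact add_mem (memW l r hr _) (key l f (fdeg _ _ _ r l hr) G0)
  | zero => simp [tD]
  | add x y _ _ hx hy =>
    have h : tD lam g1 g2 i (x + y) = tD lam g1 g2 i x + tD lam g1 g2 i y := by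
      simp only [tD, map_add, mul_add, smul_add]; ring
    rw [h]; exact add_mem hx hy
  | smul c x _ hx =>
    have h : tD lam g1 g2 i (c • x) = c • tD lam g1 g2 i x := by
      simp [tD, map_smul, smul_add, smul_smul, mul_smul_comm, mul_comm]
    rw [h]; exact Submodule.smul_mem _ _ hx

/-- Projection used to show that `W_l` is proper: `s₁ ↦ Y, s₂ ↦ -Y, t₁ ↦ 0, t₂ ↦ 0`. -/
noncomputable def psi : P4 →ₐ[ℂ] Polynomial ℂ := aeval ![Polynomial.X, -Polynomial.X, 0, 0]

lemma psi_emb (g : MvPolynomial (Fin 2) ℂ) :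
    psi (tEmb g) = Polynomial.C (constantCoeff g) := by
  rw [tEmb, psi, aeval_rename]
  have h : (![Polynomial.X, -Polynomial.X, 0, 0] ∘ ![2, 3]) = (fun _ => (0 : Polynomial ℂ)) := by
    funext j; fin_cases j <;> simp
  rw [h, aeval_zero']
  rfl

lemma psi_deg (l : ℕ) {q : P4} (hq : q ∈ Wl l) : (psi q).natDegree ≤ l := by
  induction hq using Submodule.span_induction with
  | mem x hx =>
    obtain ⟨r, p, g, hr, rfl⟩ := hx
    rw [map_mul, map_mul, map_pow, map_pow, psi_emb,
      show psi (X 0) = Polynomial.X by simp [psi],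
      show psi (X 0 + X 1) = 0 by simp [psi]]
    refine le_trans Polynomial.natDegree_mul_le ?_
    rw [Polynomial.natDegree_C, add_zero]
    refine le_trans Polynomial.natDegree_mul_le ?_
    rw [Polynomial.natDegree_X_pow, Polynomial.natDegree_pow, Polynomial.natDegree_zero,
      mul_zero, add_zero]
    exact hr
  | zero => simp
  | add x y _ _ hx hy =>
    rw [map_add]; exact le_trans (Polynomial.natDegree_add_le _ _) (max_le hx hy)
  | smul c x _ hx =>
    rw [map_smul]; exact le_trans (Polynomial.natDegree_smul_le _ _) hx

/-- Each `W_l` is a proper nonzero submodule of the tensor product module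
`Ω(λ,α₁,β₁,γ₁) ⊗ Ω(λ,α₂,β₂,γ₂)` over the affine-Virasoro algebra of type `A₁`; in
particular this tensor product module is reducible. -/
theorem stmt12 (lam a1 a2 : ℂ) (hlam : lam ≠ 0) (ha1 : a1 ≠ 0) (ha2 : a2 ≠ 0)
    (b1 b2 g1 g2 : ℂ) (l : ℕ) :
    (∀ (i : ℤ), ∀ q ∈ Wl l, tE lam a1 a2 i q ∈ Wl l ∧ tF lam a1 a2 b1 b2 i q ∈ Wl l ∧
      tH lam i q ∈ Wl l ∧ tD lam g1 g2 i q ∈ Wl l) ∧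
    Wl l ≠ ⊥ ∧ Wl l ≠ ⊤ := by
  refine ⟨fun i q hq => ⟨tE_mem lam a1 a2 i l hq, tF_mem lam a1 a2 b1 b2 i l hq,
    tH_mem lam i l hq, tD_mem lam g1 g2 i l hq⟩, ?_, ?_⟩
  · intro h
    have h1 : (1 : P4) ∈ Wl l := Submodule.subset_span ⟨0, 0, 1, Nat.zero_le l, by simp⟩
    rw [h] at h1
    exact one_ne_zero ((Submodule.mem_bot ℂ).mp h1)
  · intro h
    have hx : (X 0 : P4) ^ (l + 1) ∈ Wl l := h ▸ Submodule.mem_top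
    have hd := psi_deg l hx
    rw [map_pow, show psi (X 0) = Polynomial.X by simp [psi],
      Polynomial.natDegree_X_pow] at hd
    omega
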